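/- For every odd integer m > 1, sum_{n=0}^{m-1} [4n-1] (q^{-1};q^2)_n^4 / (q^2;q^2)_n^4 · q^{4n} = -((1+q)[2m-2][2m-1] + q^{2m-2}) / (q (-q;q)_{m-1}^8) · (qbinom(2m-2, m-1))^4 in ℚ(q). -/

import Mathlib

open RatFunc

noncomputable def q : RatFunc ℚ := RatFunc.X

/-- q-shifted factorial `(a;b)_m = ∏_{j=0}^{m-1} (1 - a b^j)`. -/
noncomputable def qpoch (a b : RatFunc ℚ) (m : ℕ) : RatFunc ℚ :=
  ∏ j ∈ Finset.range m, (1 - a * b ^ j)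

/-- q-integer `[m] = (1-q^m)/(1-q)` for an arbitrary integer `m`. -/
noncomputable def qintZ (m : ℤ) : RatFunc ℚ := (1 - q ^ m) / (1 - q)

/-- q-integer `[m] = 1 + q + ⋯ + q^{m-1}`. -/
noncomputable def qint (m : ℕ) : RatFunc ℚ := ∑ i ∈ Finset.range m, q ^ i

/-- q-binomial coefficient `(q;q)_n / ((q;q)_k (q;q)_{n-k})`. -/
noncomputable def qbinom (n k : ℕ) : RatFunc ℚ :=
  qpoch q q n / (qpoch q q k * qpoch q q (n - k))

/-!
The sum telescopes. Write `C k = (q;q²)_k / (q²;q²)_k`. Since `(q;q)_{2k} = (q;q²)_k (q²;q²)_k`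
and `(q²;q²)_k = (q;q)_k (-q;q)_k`, the central q-binomial is `qbinom (2k) k = (-q;q)_k² C k`, so
the right-hand side at `m = k + 1` is `-(((1+q)[2k][2k+1] + q^{2k}) / q) C k⁴`. The `n = k + 1`
summand is likewise a rational function of `q` and `q^{2k}` times `C k⁴`, and
`C (k+1) = C k (1 - q^{2k+1}) / (1 - q^{2k+2})`; the inductive step is thus an identity of
rational functions in two variables.
-/

open Finset

lemma q_ne_zero : q ≠ 0 := RatFunc.X_ne_zero

lemma algebraMap_ne_zero_of_eval_ne_zero {K : Type*} [Field K] {p : Polynomial K} {a : K}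
    (h : p.eval a ≠ 0) : algebraMap (Polynomial K) (RatFunc K) p ≠ 0 :=
  RatFunc.algebraMap_ne_zero (fun hp => h (by simp [hp]))

lemma one_sub_q_pow_ne_zero {n : ℕ} (hn : n ≠ 0) : 1 - q ^ n ≠ 0 := by
  have h := algebraMap_ne_zero_of_eval_ne_zero (K := ℚ) (p := 1 - Polynomial.X ^ n) (a := 0)
    (by simp [hn])
  rwa [map_sub, map_one, map_pow, RatFunc.algebraMap_X] at h

lemma one_add_q_pow_ne_zero (n : ℕ) : 1 + q ^ n ≠ 0 := by
  have h := algebraMap_ne_zero_of_eval_ne_zero (K := ℚ) (p := 1 + Polynomial.X ^ n) (a := 1)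
    (by norm_num)
  rwa [map_add, map_one, map_pow, RatFunc.algebraMap_X] at h

lemma one_sub_q_ne_zero : 1 - q ≠ 0 := by
  simpa using one_sub_q_pow_ne_zero one_ne_zero

lemma qpoch_zero (a b : RatFunc ℚ) : qpoch a b 0 = 1 := prod_range_zero _

lemma qpoch_succ (a b : RatFunc ℚ) (n : ℕ) :
    qpoch a b (n + 1) = qpoch a b n * (1 - a * b ^ n) := prod_range_succ _ _

lemma qpoch_q_q_ne_zero (n : ℕ) : qpoch q q n ≠ 0 :=
  prod_ne_zero_iff.2 fun j _ => by
    simpa [← pow_succ'] using one_sub_q_pow_ne_zero j.succ_ne_zero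

lemma qpoch_neg_q_q_ne_zero (n : ℕ) : qpoch (-q) q n ≠ 0 :=
  prod_ne_zero_iff.2 fun j _ => by
    simpa [← pow_succ'] using one_add_q_pow_ne_zero (j + 1)

lemma qpoch_sq_sq_eq (n : ℕ) : qpoch (q ^ 2) (q ^ 2) n = qpoch q q n * qpoch (-q) q n := by
  induction n with
  | zero => simp [qpoch_zero]
  | succ k ih => rw [qpoch_succ, qpoch_succ, qpoch_succ, ih]; ring

lemma qpoch_q_q_two_mul (n : ℕ) :
    qpoch q q (2 * n) = qpoch q (q ^ 2) n * qpoch (q ^ 2) (q ^ 2) n := by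
  induction n with
  | zero => simp [qpoch_zero]
  | succ k ih =>
    rw [mul_add_one, qpoch_succ, qpoch_succ, ih, qpoch_succ, qpoch_succ]
    ring

lemma qpoch_inv_q_succ (n : ℕ) :
    qpoch q⁻¹ (q ^ 2) (n + 1) = (1 - q⁻¹) * qpoch q (q ^ 2) n := by
  induction n with
  | zero => simp [qpoch_zero, qpoch_succ]
  | succ k ih =>
    rw [qpoch_succ, ih, qpoch_succ, pow_succ (q ^ 2) k]
    field_simp [q_ne_zero]

lemma qint_eq_div (n : ℕ) : qint n = (1 - q ^ n) / (1 - q) := by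
  rw [eq_div_iff one_sub_q_ne_zero, qint, ← neg_sub q, mul_neg, geom_sum_mul, neg_sub]

noncomputable def centralRatio (k : ℕ) : RatFunc ℚ :=
  qpoch q (q ^ 2) k / qpoch (q ^ 2) (q ^ 2) k

lemma centralRatio_succ (k : ℕ) :
    centralRatio (k + 1)
      = centralRatio k * ((1 - q * q ^ (2 * k)) / (1 - q ^ 2 * q ^ (2 * k))) := by
  rw [centralRatio, centralRatio, qpoch_succ, qpoch_succ, mul_div_mul_comm, ← pow_mul,
    mul_comm 2 k]

lemma qbinom_two_mul_self (k : ℕ) :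
    qbinom (2 * k) k = qpoch (-q) q k ^ 2 * centralRatio k := by
  have hE := qpoch_q_q_ne_zero k
  have hD := qpoch_neg_q_q_ne_zero k
  rw [qbinom, two_mul, Nat.add_sub_cancel, ← two_mul, qpoch_q_q_two_mul, centralRatio,
    qpoch_sq_sq_eq]
  field_simp

noncomputable def summand (n : ℕ) : RatFunc ℚ :=
  qintZ (4 * n - 1) * qpoch q⁻¹ (q ^ 2) n ^ 4 / qpoch (q ^ 2) (q ^ 2) n ^ 4 * q ^ (4 * n)

lemma summand_succ (k : ℕ) :
    summand (k + 1) = (1 - q ^ 3 * (q ^ (2 * k)) ^ 2) / (1 - q) * (1 - q⁻¹) ^ 4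
      * (q ^ 4 * (q ^ (2 * k)) ^ 2) / (1 - q ^ 2 * q ^ (2 * k)) ^ 4 * centralRatio k ^ 4 := by
  have hexp : (4 * ((k + 1 : ℕ) : ℤ) - 1) = ((4 * k + 3 : ℕ) : ℤ) := by push_cast; ring
  rw [summand, hexp, qintZ, zpow_natCast, qpoch_inv_q_succ, qpoch_succ (q ^ 2), centralRatio,
    ← pow_mul, mul_comm 2 k]
  field_simp
  ring

/-- The right-hand side at `m = k + 1`, after cancelling the powers of `(-q;q)_k`. -/
noncomputable def partialSum (k : ℕ) : RatFunc ℚ :=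
  -(((1 + q) * qint (2 * k) * qint (2 * k + 1) + q ^ (2 * k)) / q) * centralRatio k ^ 4

lemma telescoping_scalar {F : Type*} [Field F] {x v : F} (hx : x ≠ 0) (h1x : 1 - x ≠ 0)
    (hv : 1 - x ^ 2 * v ≠ 0) :
    -(((1 + x) * ((1 - v) / (1 - x)) * ((1 - x * v) / (1 - x)) + v) / x)
        + (1 - x ^ 3 * v ^ 2) / (1 - x) * (1 - x⁻¹) ^ 4 * (x ^ 4 * v ^ 2) / (1 - x ^ 2 * v) ^ 4
      = -(((1 + x) * ((1 - x ^ 2 * v) / (1 - x)) * ((1 - x ^ 3 * v) / (1 - x)) + x ^ 2 * v) / x)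
          * ((1 - x * v) / (1 - x ^ 2 * v)) ^ 4 := by
  field_simp
  ring

lemma partialSum_succ (k : ℕ) : partialSum (k + 1) = partialSum k + summand (k + 1) := by
  have hv : 1 - q ^ 2 * q ^ (2 * k) ≠ 0 := by
    rw [← pow_add]; exact one_sub_q_pow_ne_zero (by omega)
  have key := telescoping_scalar q_ne_zero one_sub_q_ne_zero hv
  rw [partialSum, partialSum, summand_succ, centralRatio_succ]
  simp only [qint_eq_div]
  linear_combination -centralRatio k ^ 4 * key

lemma sum_range_summand (k : ℕ) : ∑ n ∈ range (k + 1), summand n = partialSum k := by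
  induction k with
  | zero =>
    simp only [zero_add, sum_range_one, summand, partialSum, centralRatio, qintZ, qint,
      qpoch_zero]
    norm_num
    field_simp [q_ne_zero, one_sub_q_ne_zero]
    ring
  | succ k ih => rw [sum_range_succ, ih, partialSum_succ]

theorem sum_identity_full_general (m : ℕ) (hm : Odd m) :
    ∑ n ∈ Finset.range m,
        qintZ (4 * n - 1) * qpoch q⁻¹ (q ^ 2) n ^ 4 / qpoch (q ^ 2) (q ^ 2) n ^ 4 * q ^ (4 * n)
      = -(((1 + q) * qint (2 * m - 2) * qint (2 * m - 1) + q ^ (2 * m - 2)) /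
          (q * qpoch (-q) q (m - 1) ^ 8)) * qbinom (2 * m - 2) (m - 1) ^ 4 := by
  obtain ⟨k, rfl⟩ := Nat.exists_eq_add_one.2 hm.pos
  have hD := qpoch_neg_q_q_ne_zero k
  have h2 : 2 * (k + 1) - 2 = 2 * k := by omega
  have h1 : 2 * (k + 1) - 1 = 2 * k + 1 := by omega
  refine (sum_range_summand k).trans ?_
  rw [partialSum, h2, h1, Nat.add_sub_cancel, qbinom_two_mul_self]
  field_simp

theorem sum_identity_full (m : ℕ) (hm : Odd m) (hm1 : 1 < m) :
    ∑ n ∈ Finset.range m,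
        qintZ (4 * n - 1) * qpoch q⁻¹ (q ^ 2) n ^ 4 / qpoch (q ^ 2) (q ^ 2) n ^ 4 * q ^ (4 * n)
      = -(((1 + q) * qint (2 * m - 2) * qint (2 * m - 1) + q ^ (2 * m - 2)) /
          (q * qpoch (-q) q (m - 1) ^ 8)) * qbinom (2 * m - 2) (m - 1) ^ 4 :=
  sum_identity_full_general m hm
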